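/- For n ≥ 1, the number of completely flooding cascade sets of the path graph P_n equals the n-th Fibonacci number f_n (where f_1 = f_2 = 1). -/

import Mathlib

open scoped Classical
open Polynomial

/-- One step of the cascade sequence: add all vertices having at least two
neighbors in the current set. -/
noncomputable def floodStep {V : Type*} (G : SimpleGraph V) [Fintype V]
    (C : Finset V) : Finset V :=
  C ∪ Finset.univ.filter (fun x => 2 ≤ (C.filter (fun y => G.Adj x y)).card)

/-- `C` completely floods `G`: the cascade sequence stabilizes to all of `V`.
Since `floodStep` is inflationary, this is equivalent to some iterate being `univ`. -/
def Floods {V : Type*} (G : SimpleGraph V) [Fintype V] (C : Finset V) : Prop :=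
  ∃ k, (floodStep G)^[k] C = Finset.univ

/-- The flood polynomial of `G`. -/
noncomputable def floodPoly {V : Type*} (G : SimpleGraph V) [Fintype V] :
    Polynomial ℕ :=
  ∑ C ∈ Finset.univ.filter (fun C : Finset V => Floods G C), Polynomial.X ^ C.card

/-- The degree of a vertex. -/
noncomputable def deg {V : Type*} (G : SimpleGraph V) [Fintype V] (v : V) : ℕ :=
  (Finset.univ.filter (fun y => G.Adj v y)).card

/-!
A vertex outside the current set is flooded exactly when two of its neighbours are already in
it, so a vertex set in which every vertex has at most one neighbour outside the set is never
entered by the cascade. On `P_n` such sets are the endpoints and the pairs of adjacent vertices;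
hence `C` floods `P_n` iff it contains both endpoints and misses no two consecutive vertices, and
then it floods in one step. For such sets `S ⊆ {0, …, n + 1}` the vertex `n + 1` is forced, and
removing it leaves a set of the same kind on `n + 1` or on `n` vertices according as `n ∈ S`,
which is the Fibonacci recursion.
-/

open Finset

section Cascade

variable {V : Type*} [Fintype V] {G : SimpleGraph V}

theorem mem_floodStep {C : Finset V} {x : V} :
    x ∈ floodStep G C ↔ x ∈ C ∨ 2 ≤ #(C.filter (G.Adj x)) := by
  simp [floodStep]

theorem floods_of_two_le_card {C : Finset V} (h : ∀ x ∉ C, 2 ≤ #(C.filter (G.Adj x))) :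
    Floods G C :=
  ⟨1, eq_univ_of_forall fun x => mem_floodStep.2 (or_iff_not_imp_left.2 (h x))⟩

theorem disjoint_floodStep {S : Set V} (hS : ∀ x ∈ S, {y | y ∉ S ∧ G.Adj x y}.Subsingleton)
    {C : Finset V} (hC : Disjoint S C) : Disjoint S (floodStep G C) := by
  refine Set.disjoint_left.2 fun x hx hxC => ?_
  rcases mem_floodStep.1 hxC with hxC | h2
  · exact Set.disjoint_left.1 hC hx hxC
  · have : #(C.filter (G.Adj x)) ≤ 1 := card_le_one.2 fun a ha b hb => by
      rw [mem_filter] at ha hb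
      exact hS x hx ⟨Set.disjoint_right.1 hC ha.1, ha.2⟩ ⟨Set.disjoint_right.1 hC hb.1, hb.2⟩
    omega

theorem Floods.exists_mem_of_subsingleton {C : Finset V} (hC : Floods G C) {S : Set V}
    (hS : ∀ x ∈ S, {y | y ∉ S ∧ G.Adj x y}.Subsingleton) (hne : S.Nonempty) :
    ∃ x ∈ C, x ∈ S := by
  by_contra! h
  obtain ⟨k, hk⟩ := hC
  have hdisj : Disjoint S ((floodStep G)^[k] C) :=
    Function.Iterate.rec (fun D : Finset V => Disjoint S ↑D) (Set.disjoint_right.2 h)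
      (fun _ => disjoint_floodStep hS) k
  rw [hk, coe_univ, Set.disjoint_univ] at hdisj
  exact hne.ne_empty hdisj

end Cascade

-- As `S ⊆ range n`, the condition at `i = n - 1` forces `n - 1 ∈ S`, the other end of the path.
def pathFloodSets (n : ℕ) : Finset (Finset ℕ) :=
  (range n).powerset.filter fun S => 0 ∈ S ∧ ∀ i < n, i ∈ S ∨ i + 1 ∈ S

theorem subset_range_of_mem_pathFloodSets {n : ℕ} {S : Finset ℕ} (hS : S ∈ pathFloodSets n) :
    S ⊆ range n :=
  mem_powerset.1 (mem_filter.1 hS).1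

theorem mem_of_mem_pathFloodSets_succ {n : ℕ} {S : Finset ℕ} (hS : S ∈ pathFloodSets (n + 1)) :
    n ∈ S :=
  ((mem_filter.1 hS).2.2 n n.lt_succ_self).resolve_right fun h =>
    notMem_range_self (subset_range_of_mem_pathFloodSets hS h)

theorem pathFloodSets_add_two (n : ℕ) :
    pathFloodSets (n + 2) = (pathFloodSets (n + 1) ∪ pathFloodSets n).image (insert (n + 1)) := by
  ext S
  constructor
  · intro hS
    refine mem_image.2 ⟨S.erase (n + 1), ?_, insert_erase (mem_of_mem_pathFloodSets_succ hS)⟩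
    simp only [pathFloodSets, mem_union, mem_filter, mem_powerset, subset_iff, mem_range,
      mem_erase] at hS ⊢
    by_cases hn : n ∈ S
    · exact Or.inl (by grind)
    · exact Or.inr (by grind)
  · intro hS
    obtain ⟨T, hT, rfl⟩ := mem_image.1 hS
    simp only [pathFloodSets, mem_union, mem_filter, mem_powerset, subset_iff, mem_range,
      mem_insert] at hT ⊢
    grind

theorem card_pathFloodSets : ∀ n, #(pathFloodSets n) = Nat.fib n
  | 0 => by decide
  | 1 => by decide
  | n + 2 => by
    have hdisj : Disjoint (pathFloodSets (n + 1)) (pathFloodSets n) :=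
      disjoint_left.2 fun T hT hT' => notMem_range_self
        (subset_range_of_mem_pathFloodSets hT' (mem_of_mem_pathFloodSets_succ hT))
    have hinj : Set.InjOn (insert (n + 1))
        (↑(pathFloodSets (n + 1) ∪ pathFloodSets n) : Set (Finset ℕ)) := by
      have top_notMem : ∀ T ∈ pathFloodSets (n + 1) ∪ pathFloodSets n, n + 1 ∉ T := by
        intro T hT hT'
        rcases mem_union.1 hT with hT | hT <;>
          have := mem_range.1 (subset_range_of_mem_pathFloodSets hT hT') <;> omega
      intro T hT U hU hTU
      rw [← erase_insert (top_notMem T hT), hTU, erase_insert (top_notMem U hU)]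
    rw [pathFloodSets_add_two, card_image_of_injOn hinj, card_union_of_disjoint hdisj,
      card_pathFloodSets (n + 1), card_pathFloodSets n, Nat.fib_add_two, add_comm]

theorem map_valEmbedding_subset_range {n : ℕ} (C : Finset (Fin n)) :
    C.map Fin.valEmbedding ⊆ range n := by
  rw [← Nat.Iio_eq_range, ← Fin.map_valEmbedding_univ]
  exact map_subset_map.2 (subset_univ C)

theorem Floods.map_valEmbedding_mem_pathFloodSets {n : ℕ} (hn : 0 < n) {C : Finset (Fin n)}
    (hC : Floods (SimpleGraph.pathGraph n) C) : C.map Fin.valEmbedding ∈ pathFloodSets n := by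
  simp only [pathFloodSets, mem_filter, mem_powerset, map_valEmbedding_subset_range, true_and,
    mem_map, Fin.valEmbedding_apply]
  constructor
  · refine hC.exists_mem_of_subsingleton (S := {x | x.val = 0}) (fun x hx y hy z hz => ?_)
      ⟨⟨0, hn⟩, rfl⟩
    simp only [Set.mem_ofPred_eq, SimpleGraph.pathGraph_adj] at hx hy hz
    ext; omega
  · intro i hi
    obtain ⟨x, hxC, hx | hx⟩ := hC.exists_mem_of_subsingleton
      (S := {x | x.val = i ∨ x.val = i + 1}) (fun x hx y hy z hz => by
        simp only [Set.mem_ofPred_eq, SimpleGraph.pathGraph_adj] at hx hy hz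
        ext; omega) ⟨⟨i, hi⟩, Or.inl rfl⟩
    · exact Or.inl ⟨x, hxC, hx⟩
    · exact Or.inr ⟨x, hxC, hx⟩

theorem floods_pathGraph_of_map_valEmbedding_mem {n : ℕ} {C : Finset (Fin n)}
    (hC : C.map Fin.valEmbedding ∈ pathFloodSets n) : Floods (SimpleGraph.pathGraph n) C := by
  simp only [pathFloodSets, mem_filter, mem_map, Fin.valEmbedding_apply] at hC
  obtain ⟨-, ⟨z, hzC, hz⟩, hcov⟩ := hC
  refine floods_of_two_le_card fun x hx => ?_
  obtain ⟨a, haC, ha⟩ : ∃ a ∈ C, a.val + 1 = x.val := by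
    have hx0 : x.val ≠ 0 := fun h => hx (Fin.ext (hz.trans h.symm) ▸ hzC)
    rcases hcov (x.val - 1) (by omega) with ⟨a, haC, ha⟩ | ⟨a, haC, ha⟩
    · exact ⟨a, haC, by omega⟩
    · exact absurd ((Fin.ext (by omega) : a = x) ▸ haC) hx
  obtain ⟨b, hbC, hb⟩ : ∃ b ∈ C, x.val + 1 = b.val := by
    rcases hcov x.val x.isLt with ⟨b, hbC, hb⟩ | ⟨b, hbC, hb⟩
    · exact absurd (Fin.ext hb ▸ hbC) hx
    · exact ⟨b, hbC, hb.symm⟩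
  refine one_lt_card.2 ⟨a, ?_, b, ?_, fun h => ?_⟩
  · simpa [SimpleGraph.pathGraph_adj, haC] using Or.inr ha
  · simpa [SimpleGraph.pathGraph_adj, hbC] using Or.inl hb
  · rw [Fin.ext_iff] at h; omega

theorem card_floods_pathGraph {n : ℕ} (hn : 0 < n) :
    #(univ.filter fun C : Finset (Fin n) => Floods (SimpleGraph.pathGraph n) C) =
      #(pathFloodSets n) := by
  rw [← card_map (mapEmbedding Fin.valEmbedding).toEmbedding]
  congr 1
  ext S
  simp only [mem_map, mem_filter, mem_univ, true_and, RelEmbedding.coe_toEmbedding,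
    mapEmbedding_apply]
  refine ⟨fun ⟨C, hC, hCS⟩ => hCS ▸ hC.map_valEmbedding_mem_pathFloodSets hn, fun hS => ?_⟩
  have : S ⊆ (univ : Finset (Fin n)).map Fin.valEmbedding := by
    rw [Fin.map_valEmbedding_univ, Nat.Iio_eq_range]
    exact subset_range_of_mem_pathFloodSets hS
  obtain ⟨C, -, rfl⟩ := subset_map_iff.1 this
  exact ⟨C, floods_pathGraph_of_map_valEmbedding_mem hS, rfl⟩

theorem card_path_flood_sets_eq_fib (n : ℕ) (hn : 1 ≤ n) :
    (Finset.univ.filter (fun C : Finset (Fin n) =>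
        Floods (SimpleGraph.pathGraph n) C)).card = Nat.fib n := by
  rw [card_floods_pathGraph hn, card_pathFloodSets]
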